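/- Let n be an odd positive integer and let v ∈ 𝔽_2^n with v_0 = 0, with coordinates indexed by ℤ/nℤ. Then v and ê work together if and only if there is no subset S ⊆ ℤ/nℤ of odd cardinality such that for every i ∈ S the number of elements j ∈ S with v_{j−i} = 1 is odd. -/

import Mathlib

/-- The cyclic shift operator on `𝔽₂ⁿ` (indexed by `ZMod n`): `(cshift x) i = x (i - 1)`. -/
def cshift {n : ℕ} (x : ZMod n → ZMod 2) : ZMod n → ZMod 2 := fun i => x (i - 1)

/-- The standard dot product over `𝔽₂`. -/
def dot {n : ℕ} [NeZero n] (v x : ZMod n → ZMod 2) : ZMod 2 := ∑ i, v i * x i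

/-- A vector `v ∈ 𝔽₂ⁿ` works if for every `x` some cyclic shift of `x` is orthogonal to `v`. -/
def Works {n : ℕ} [NeZero n] (v : ZMod n → ZMod 2) : Prop :=
  ∀ x : ZMod n → ZMod 2, ∃ k : ℕ, dot v (cshift^[k] x) = 0

/-- Two vectors `v, w ∈ 𝔽₂ⁿ` work together if for every `x` there is a single cyclic shift
of `x` orthogonal to both. -/
def WorkTogether2 {n : ℕ} [NeZero n] (v w : ZMod n → ZMod 2) : Prop :=
  ∀ x : ZMod n → ZMod 2, ∃ k : ℕ,
    dot v (cshift^[k] x) = 0 ∧ dot w (cshift^[k] x) = 0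

/-- The vector `ê ∈ 𝔽₂ⁿ` with `ê 0 = 0` and `ê i = 1` for `i ≠ 0`. -/
def ehat (n : ℕ) : ZMod n → ZMod 2 := fun i => if i = 0 then 0 else 1


/-!
Write `S` for the support of `x` and put the shift `σ^k` so that `i = -k` lands at position `0`.
Then `v · σ^k x` is the parity of the outdegree of `i` into `S`, and `ê · σ^k x = |S| + [i ∈ S]`.
So `v` and `ê` work together iff every `S` admits an `i` of even outdegree into `S` such that
`i ∈ S` iff `|S|` is odd. For odd `|S|` this is exactly "`S` is not bad". For even `|S|`, pass to the
odd set `Sᶜ`: outdegrees into `S` and `Sᶜ` add up to the weight of `v`, which is even because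
`ℤ/nℤ` itself (of odd size `n`) is not bad.
-/

open Finset

section Parity

lemma ZMod.eq_one_of_ne_zero_two {a : ZMod 2} (h : a ≠ 0) : a = 1 := by
  revert a
  decide

variable {α : Type*}

lemma natCast_card_filter_eq_one_eq_sum (S : Finset α) (f : α → ZMod 2) :
    ((S.filter (f · = 1)).card : ZMod 2) = ∑ j ∈ S, f j := by
  rw [natCast_card_filter]
  refine sum_congr rfl fun j _ => ?_
  generalize f j = a
  revert a
  decide

lemma odd_card_filter_eq_one_iff (S : Finset α) (f : α → ZMod 2) :
    Odd (S.filter (f · = 1)).card ↔ ∑ j ∈ S, f j = 1 := by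
  rw [← ZMod.natCast_eq_one_iff_odd, natCast_card_filter_eq_one_eq_sum]

lemma sum_mul_eq_sum_filter_eq_one [Fintype α] (w x : α → ZMod 2) :
    ∑ j, w j * x j = ∑ j ∈ univ.filter (x · = 1), w j := by
  rw [sum_filter]
  refine sum_congr rfl fun j _ => ?_
  rcases eq_or_ne (x j) 0 with hx | hx
  · simp [hx]
  · simp [ZMod.eq_one_of_ne_zero_two hx]

end Parity

section Shift

variable {n : ℕ}

lemma cshift_iterate_apply (x : ZMod n → ZMod 2) (k : ℕ) (i : ZMod n) :
    (cshift^[k] x) i = x (i - k) := by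
  induction k generalizing x with
  | zero => simp
  | succ k ih =>
    rw [Function.iterate_succ_apply, ih]
    simp only [cshift, Nat.cast_succ, sub_sub]

variable [NeZero n]

lemma sum_cshift_iterate (x : ZMod n → ZMod 2) (k : ℕ) :
    ∑ i, (cshift^[k] x) i = ∑ i, x i := by
  simp only [cshift_iterate_apply]
  exact Equiv.sum_comp (Equiv.subRight (k : ZMod n)) x

lemma dot_cshift_iterate (v x : ZMod n → ZMod 2) (k : ℕ) :
    dot v (cshift^[k] x) = ∑ j ∈ univ.filter (x · = 1), v (j + k) := by
  rw [← sum_mul_eq_sum_filter_eq_one, dot]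
  refine (Fintype.sum_equiv (Equiv.addRight (k : ZMod n)) _ _ fun j => ?_).symm
  simp [cshift_iterate_apply]

lemma dot_ehat_add_apply_zero (y : ZMod n → ZMod 2) :
    dot (ehat n) y + y 0 = ∑ i, y i := by
  rw [dot, ← sum_erase_add univ _ (mem_univ 0), ← sum_erase_add univ y (mem_univ 0)]
  simp only [ehat, if_true, zero_mul, add_zero]
  congr 1
  exact sum_congr rfl fun i hi => by simp [ne_of_mem_erase hi]

/-- With `k ≡ -i`, the shift `σ^k x` has `x i` in position `0`. -/
lemma dot_cshift_iterate_eq_zero_and_dot_ehat_iff (v x : ZMod n → ZMod 2) (k : ℕ) (i : ZMod n)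
    (hk : (k : ZMod n) = -i) :
    dot v (cshift^[k] x) = 0 ∧ dot (ehat n) (cshift^[k] x) = 0 ↔
      ∑ j ∈ univ.filter (x · = 1), v (j - i) = 0 ∧
        (i ∈ univ.filter (x · = 1) ↔ Odd (univ.filter (x · = 1)).card) := by
  have hsum : ∑ j, x j = (univ.filter (x · = 1)).card := by
    simpa using (natCast_card_filter_eq_one_eq_sum univ x).symm
  have hehat := dot_ehat_add_apply_zero (cshift^[k] x)
  rw [sum_cshift_iterate, cshift_iterate_apply, hk, zero_sub, neg_neg, hsum] at hehat
  rw [dot_cshift_iterate, hk, ← ZMod.natCast_eq_one_iff_odd, ← hehat]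
  simp only [← sub_eq_add_neg, mem_filter, mem_univ, true_and]
  refine and_congr_right' ?_
  generalize dot (ehat n) (cshift^[k] x) = d
  generalize x i = a
  revert d a
  decide

lemma workTogether2_ehat_iff (v : ZMod n → ZMod 2) :
    WorkTogether2 v (ehat n) ↔
      ∀ S : Finset (ZMod n), ∃ i, ∑ j ∈ S, v (j - i) = 0 ∧ (i ∈ S ↔ Odd S.card) := by
  constructor
  · intro h S
    have hS : univ.filter ((fun j => if j ∈ S then 1 else 0 : ZMod n → ZMod 2) · = 1) = S := by
      ext j
      by_cases hj : j ∈ S <;> simp [hj]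
    obtain ⟨k, hk⟩ := h fun j => if j ∈ S then 1 else 0
    refine ⟨-k, ?_⟩
    rwa [dot_cshift_iterate_eq_zero_and_dot_ehat_iff v _ k (-k) (neg_neg _).symm, hS] at hk
  · intro h x
    obtain ⟨i, hi⟩ := h (univ.filter (x · = 1))
    exact ⟨(-i).val, (dot_cshift_iterate_eq_zero_and_dot_ehat_iff v x _ i
      (ZMod.natCast_zmod_val _)).2 hi⟩

end Shift

section BadSets

variable {n : ℕ} [NeZero n]

/-- The sum is the parity of the outdegree of `i` in the subgraph of `G_v` induced on `S`. -/
def IsBadSet (v : ZMod n → ZMod 2) (S : Finset (ZMod n)) : Prop :=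
  Odd S.card ∧ ∀ i ∈ S, ∑ j ∈ S, v (j - i) = 1

variable {v : ZMod n → ZMod 2}

lemma isBadSet_univ (hn : Odd n) (hv : ∑ j, v j = 1) : IsBadSet v univ := by
  refine ⟨by rwa [card_univ, ZMod.card], fun i _ => ?_⟩
  rw [← hv]
  exact Equiv.sum_comp (Equiv.subRight i) v

lemma isBadSet_compl (hn : Odd n) (hv : ∑ j, v j = 0) {S : Finset (ZMod n)} (hS : Even S.card)
    (hout : ∀ i ∉ S, ∑ j ∈ S, v (j - i) = 1) : IsBadSet v Sᶜ := by
  refine ⟨?_, fun i hi => ?_⟩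
  · rw [card_compl, ZMod.card]
    exact Nat.Odd.sub_even (card_le_univ S |>.trans_eq (ZMod.card n)) hn hS
  · have hsplit := sum_add_sum_compl S (fun j => v (j - i))
    have hshift : ∑ j, v (j - i) = ∑ j, v j := Equiv.sum_comp (Equiv.subRight i) v
    rw [hout i (mem_compl.1 hi), hshift, hv] at hsplit
    simpa [CharTwo.neg_eq] using eq_neg_of_add_eq_zero_right hsplit

lemma exists_even_outdeg_of_forall_not_isBadSet (hn : Odd n) (hno : ∀ S, ¬IsBadSet v S)
    (S : Finset (ZMod n)) : ∃ i, ∑ j ∈ S, v (j - i) = 0 ∧ (i ∈ S ↔ Odd S.card) := by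
  by_contra hS
  rcases Nat.even_or_odd S.card with heven | hodd
  · have hv : ∑ j, v j = 0 := by
      by_contra hv
      exact hno univ (isBadSet_univ hn (ZMod.eq_one_of_ne_zero_two hv))
    refine hno Sᶜ (isBadSet_compl hn hv heven fun i hi => ZMod.eq_one_of_ne_zero_two fun h => ?_)
    exact hS ⟨i, h, iff_of_false hi (Nat.not_odd_iff_even.2 heven)⟩
  · exact hno S ⟨hodd, fun i hi =>
      ZMod.eq_one_of_ne_zero_two fun h => hS ⟨i, h, iff_of_true hi hodd⟩⟩

lemma forall_exists_even_outdeg_iff (hn : Odd n) :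
    (∀ S : Finset (ZMod n), ∃ i, ∑ j ∈ S, v (j - i) = 0 ∧ (i ∈ S ↔ Odd S.card)) ↔
      ∀ S, ¬IsBadSet v S := by
  refine ⟨fun h S ⟨hodd, hout⟩ => ?_, exists_even_outdeg_of_forall_not_isBadSet hn⟩
  obtain ⟨i, heven, hi⟩ := h S
  exact zero_ne_one (heven.symm.trans (hout i (hi.2 hodd)))

end BadSets

theorem workTogether_ehat_iff_no_bad_subgraph_general (n : ℕ) [NeZero n] (hn : Odd n)
    (v : ZMod n → ZMod 2) :
    WorkTogether2 v (ehat n) ↔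
      ¬ ∃ S : Finset (ZMod n), Odd S.card ∧
          ∀ i ∈ S, Odd (S.filter (fun j => v (j - i) = 1)).card := by
  rw [workTogether2_ehat_iff, forall_exists_even_outdeg_iff hn, not_exists]
  simp only [IsBadSet, odd_card_filter_eq_one_iff]

/-- Let `n` be odd and `v ∈ 𝔽₂ⁿ` with `v 0 = 0` (coordinates indexed by `ℤ/nℤ`). Then `v`
and `ê` work together iff there is no subset `S ⊆ ℤ/nℤ` of odd cardinality such that for
every `i ∈ S` the number of `j ∈ S` with `v (j - i) = 1` (the outdegree of `i` in the
subgraph of the Cayley digraph `G_v` induced on `S`) is odd. -/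
theorem workTogether_ehat_iff_no_bad_subgraph (n : ℕ) [NeZero n] (hn : Odd n)
    (v : ZMod n → ZMod 2) (h0 : v 0 = 0) :
    WorkTogether2 v (ehat n) ↔
      ¬ ∃ S : Finset (ZMod n), Odd S.card ∧
          ∀ i ∈ S, Odd (S.filter (fun j => v (j - i) = 1)).card :=
  workTogether_ehat_iff_no_bad_subgraph_general n hn v
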